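/- A nonzero B_n-submodule W of V is indecomposable if and only if W is contained in V_k for some 0 ≤ k ≤ n. -/

import Mathlib

/-! In characteristic zero a `B_n`-submodule is graded by cardinality: it is stable under
`∑ₐ e_a`, where `e_a` is the partial identity missing `a`, and this operator acts on `V_k` as the
scalar `n - k`, so the submodule is the sum of its intersections with the eigenspaces. A submodule
not contained in one `V_k` therefore splits as its part in `V_k` plus the rest. Conversely, let
`W ≤ V_k` and let `S` lie in the support of a nonzero vector of a submodule of `W`: the map sending
each `a ∈ S` to its rank in `S` lies in `B_n` and sends that vector to a nonzero multiple of
`v_{1,…,k}`, so any two nonzero submodules of `W` meet. -/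

open Finset

/-- `f : Fin n → Option (Fin n)` represents an injective partial map of `{1,…,n}`
(elements 0-indexed): `f a = some x` means `a ∈ D(f)` with image `x`. Injectivity: -/
def IsPartialInj {n : ℕ} (f : Fin n → Option (Fin n)) : Prop :=
  ∀ a b x, f a = some x → f b = some x → a = b

/-- order preserving: `a < b` in the domain implies `f a < f b`. -/
def IsOrderPres {n : ℕ} (f : Fin n → Option (Fin n)) : Prop :=
  ∀ a b x y, a < b → f a = some x → f b = some y → x < y

/-- order decreasing: `f a ≤ a` on the domain. -/
def IsOrderDec {n : ℕ} (f : Fin n → Option (Fin n)) : Prop :=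
  ∀ a x, f a = some x → x ≤ a

/-- The planar upper triangular rook monoid `B_n`: order-preserving,
order-decreasing injective partial maps of `{1,…,n}`. -/
def Bn (n : ℕ) : Set (Fin n → Option (Fin n)) :=
  {f | IsPartialInj f ∧ IsOrderPres f ∧ IsOrderDec f}

/-- domain of the partial map. -/
def domf {n : ℕ} (f : Fin n → Option (Fin n)) : Finset (Fin n) :=
  Finset.univ.filter (fun a => (f a).isSome)

/-- image of a finite set under the partial map. -/
def fimg {n : ℕ} (f : Fin n → Option (Fin n)) (S : Finset (Fin n)) : Finset (Fin n) :=
  S.biUnion (fun a => (f a).toFinset)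

/-- the linear action of a partial map `f` on `V = ⊕_{S ⊆ n} F·v_S`:
`f · v_S = v_{f(S)}` if `S ⊆ D(f)`, and `0` otherwise. -/
noncomputable def actMap (F : Type*) [Field F] {n : ℕ} (f : Fin n → Option (Fin n)) :
    (Finset (Fin n) →₀ F) →ₗ[F] (Finset (Fin n) →₀ F) :=
  Finsupp.lsum F (fun S => if S ⊆ domf f then Finsupp.lsingle (fimg f S) else 0)

/-- a subspace `W` of `V` is a `B_n`-submodule if it is invariant under the action. -/
def IsBnSub {n : ℕ} {F : Type*} [Field F] (W : Submodule F (Finset (Fin n) →₀ F)) : Prop :=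
  ∀ f ∈ Bn n, ∀ v ∈ W, actMap F f v ∈ W

/-- the `B_n`-submodule of `V` generated by a vector `v`. -/
noncomputable def genMod (F : Type*) [Field F] {n : ℕ} (v : Finset (Fin n) →₀ F) :
    Submodule F (Finset (Fin n) →₀ F) :=
  sInf {W | IsBnSub W ∧ v ∈ W}

/-- `V_k`, the span of the `v_S` with `|S| = k`. -/
noncomputable def VK (F : Type*) [Field F] (n k : ℕ) : Submodule F (Finset (Fin n) →₀ F) :=
  Submodule.span F {w | ∃ S : Finset (Fin n), S.card = k ∧ w = Finsupp.single S (1 : F)}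

/-- the subset `{1, …, k}` of `{1, …, n}` (0-indexed: the `k` smallest elements). -/
def boldK (n k : ℕ) : Finset (Fin n) := Finset.univ.filter (fun a => a.val < k)

section

variable {n : ℕ} {F : Type*} [Field F]

lemma mem_domf {f : Fin n → Option (Fin n)} {a : Fin n} : a ∈ domf f ↔ (f a).isSome := by
  simp [domf]

lemma actMap_apply (f : Fin n → Option (Fin n)) (v : Finset (Fin n) →₀ F) :
    actMap F f v = v.sum fun T c => if T ⊆ domf f then Finsupp.single (fimg f T) c else 0 :=
  Finsupp.sum_congr fun T _ => by dsimp only; split_ifs <;> rfl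

lemma actMap_single (f : Fin n → Option (Fin n)) (T : Finset (Fin n)) (c : F) :
    actMap F f (Finsupp.single T c) =
      if T ⊆ domf f then Finsupp.single (fimg f T) c else 0 := by
  rw [actMap, Finsupp.lsum_single]
  split_ifs <;> rfl

lemma card_fimg {f : Fin n → Option (Fin n)} (hf : IsPartialInj f) {T : Finset (Fin n)}
    (hT : T ⊆ domf f) : #(fimg f T) = #T := by
  rw [fimg, card_biUnion]
  · refine (sum_congr rfl fun a ha => ?_).trans (card_eq_sum_ones T).symm
    obtain ⟨x, hx⟩ := Option.isSome_iff_exists.mp (mem_domf.mp (hT ha))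
    simp [hx]
  · intro a _ b _ hab
    simp only [disjoint_left, Option.mem_toFinset, Option.mem_def]
    exact fun x hxa hxb => hab (hf a b x hxa hxb)

lemma IsBnSub.inf {A B : Submodule F (Finset (Fin n) →₀ F)} (hA : IsBnSub A) (hB : IsBnSub B) :
    IsBnSub (A ⊓ B) :=
  fun f hf _ hv => ⟨hA f hf _ hv.1, hB f hf _ hv.2⟩

lemma isBnSub_supported {s : Set (Finset (Fin n))}
    (hs : ∀ f ∈ Bn n, ∀ S ∈ s, S ⊆ domf f → fimg f S ∈ s) :
    IsBnSub (Finsupp.supported F F s) := by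
  intro f hf v hv
  rw [Finsupp.supported_eq_span_single] at hv
  induction hv using Submodule.span_induction with
  | mem _ hx =>
    obtain ⟨S, hS, rfl⟩ := hx
    rw [actMap_single]
    split_ifs with hSf
    · exact Finsupp.single_mem_supported F 1 (hs f hf S hS hSf)
    · exact zero_mem _
  | zero => simp
  | add x y _ _ hx hy => simpa using add_mem hx hy
  | smul c x _ hx => simpa using Submodule.smul_mem _ c hx

lemma isBnSub_supported_card (p : ℕ → Prop) :
    IsBnSub (Finsupp.supported F F {S : Finset (Fin n) | p #S}) :=
  isBnSub_supported fun _ hf S hS hSf => by rwa [Set.mem_ofPred_eq, card_fimg hf.1 hSf]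

lemma VK_eq_supported (k : ℕ) : VK F n k = Finsupp.supported F F {S | #S = k} := by
  rw [Finsupp.supported_eq_span_single, VK]
  congr 1
  ext
  simp [eq_comm]

def partialId (D : Finset (Fin n)) : Fin n → Option (Fin n) :=
  fun a => if a ∈ D then some a else none

lemma partialId_mem (D : Finset (Fin n)) : partialId D ∈ Bn n := by
  refine ⟨?_, ?_, ?_⟩ <;> intro a <;> simp only [partialId] <;> aesop

lemma domf_partialId (D : Finset (Fin n)) : domf (partialId D) = D := by
  ext a
  by_cases h : a ∈ D <;> simp [mem_domf, partialId, h]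

lemma fimg_partialId {D T : Finset (Fin n)} (hT : T ⊆ D) : fimg (partialId D) T = T := by
  ext a
  simp only [fimg, partialId, mem_biUnion, Option.mem_toFinset, Option.mem_def]
  constructor
  · rintro ⟨b, hb, hba⟩
    rw [if_pos (hT hb), Option.some_inj] at hba
    exact hba ▸ hb
  · exact fun ha => ⟨a, ha, if_pos (hT ha)⟩

lemma actMap_partialId_apply (D : Finset (Fin n)) (v : Finset (Fin n) →₀ F) (S : Finset (Fin n)) :
    actMap F (partialId D) v S = if S ⊆ D then v S else 0 := by
  induction v using Finsupp.induction_linear with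
  | zero => simp
  | add v w hv hw => simp only [map_add, Finsupp.add_apply, hv, hw]; split_ifs <;> simp
  | single T c =>
    rw [actMap_single, domf_partialId]
    by_cases hTS : T = S
    · subst hTS
      split_ifs with hT
      · simp [fimg_partialId hT]
      · rfl
    · split_ifs with hT <;> simp [fimg_partialId, hT, hTS]

noncomputable def numberOp (F : Type*) [Field F] (n : ℕ) : Module.End F (Finset (Fin n) →₀ F) :=
  ∑ a : Fin n, actMap F (partialId {a}ᶜ)

lemma numberOp_apply (v : Finset (Fin n) →₀ F) (S : Finset (Fin n)) :
    numberOp F n v S = ((n : F) - #S) * v S := by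
  simp only [numberOp, LinearMap.sum_apply, Finsupp.finsetSum_apply, actMap_partialId_apply,
    subset_compl_singleton, sum_ite, sum_const_zero, add_zero, sum_const, nsmul_eq_mul]
  rw [filter_notMem_eq_sdiff, card_univ_sdiff, Fintype.card_fin,
    Nat.cast_sub (card_le_univ S |>.trans_eq (Fintype.card_fin n))]

lemma IsBnSub.numberOp_mem {W : Submodule F (Finset (Fin n) →₀ F)} (hW : IsBnSub W)
    {v : Finset (Fin n) →₀ F} (hv : v ∈ W) : numberOp F n v ∈ W := by
  rw [numberOp, LinearMap.sum_apply]
  exact sum_mem fun a _ => hW _ (partialId_mem _) v hv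

lemma single_mem_eigenspace_numberOp (S : Finset (Fin n)) (c : F) :
    Finsupp.single S c ∈ (numberOp F n).eigenspace ((n : F) - #S) := by
  rw [Module.End.mem_eigenspace_iff]
  ext T
  rw [numberOp_apply, Finsupp.smul_apply, smul_eq_mul]
  by_cases hTS : T = S
  · rw [hTS]
  · simp [Finsupp.single_eq_of_ne hTS]

lemma iSup_eigenspace_numberOp : ⨆ μ, (numberOp F n).eigenspace μ = ⊤ := by
  refine eq_top_iff.mpr fun v _ => ?_
  rw [← Finsupp.sum_single v]
  exact sum_mem fun S _ =>
    Submodule.mem_iSup_of_mem _ (single_mem_eigenspace_numberOp S (v S))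

lemma eigenspace_numberOp_le_supported (μ : F) :
    (numberOp F n).eigenspace μ ≤ Finsupp.supported F F {S | (n : F) - #S = μ} := by
  intro v hv S hS
  have hS' : v S ≠ 0 := Finsupp.mem_support_iff.mp hS
  have := congrArg (· S) (Module.End.mem_eigenspace_iff.mp hv)
  simp only [numberOp_apply, Finsupp.smul_apply, smul_eq_mul] at this
  exact mul_right_cancel₀ hS' this

lemma eigenspace_numberOp_le_or [CharZero F] (μ : F) (p : ℕ → Prop) :
    (numberOp F n).eigenspace μ ≤ Finsupp.supported F F {S | p #S} ∨
      (numberOp F n).eigenspace μ ≤ Finsupp.supported F F {S | ¬ p #S} := by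
  have card_eq {S T : Finset (Fin n)} (hS : (n : F) - #S = μ) (hT : (n : F) - #T = μ) :
      #T = #S := by exact_mod_cast sub_right_injective (hT.trans hS.symm)
  by_cases h : ∃ S : Finset (Fin n), (n : F) - #S = μ ∧ p #S
  · obtain ⟨S, hSμ, hpS⟩ := h
    refine .inl ((eigenspace_numberOp_le_supported μ).trans (Finsupp.supported_mono ?_))
    exact fun T hT => show p #T from card_eq hSμ hT ▸ hpS
  · push Not at h
    exact .inr ((eigenspace_numberOp_le_supported μ).trans (Finsupp.supported_mono h))

lemma IsBnSub.inf_supported_sup_inf_supported [CharZero F]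
    {W : Submodule F (Finset (Fin n) →₀ F)} (hW : IsBnSub W) (p : ℕ → Prop) :
    W ⊓ Finsupp.supported F F {S | p #S} ⊔ W ⊓ Finsupp.supported F F {S | ¬ p #S} = W := by
  refine le_antisymm (sup_le inf_le_left inf_le_left) ?_
  calc W = W ⊓ ⨆ μ, (numberOp F n).eigenspace μ := by rw [iSup_eigenspace_numberOp, inf_top_eq]
    _ = ⨆ μ, W ⊓ (numberOp F n).eigenspace μ :=
      Submodule.inf_iSup_genEigenspace (fun _ => hW.numberOp_mem) 1
    _ ≤ _ := iSup_le fun μ => (eigenspace_numberOp_le_or μ p).elim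
      (fun h => le_sup_of_le_left (inf_le_inf_left W h))
      (fun h => le_sup_of_le_right (inf_le_inf_left W h))

lemma exists_isBnSub_decomposition [CharZero F] {W : Submodule F (Finset (Fin n) →₀ F)}
    (hW : IsBnSub W) (hWk : ∀ k ≤ n, ¬ W ≤ VK F n k) :
    ∃ A B : Submodule F (Finset (Fin n) →₀ F),
      IsBnSub A ∧ IsBnSub B ∧ A ≠ ⊥ ∧ B ≠ ⊥ ∧ A ⊔ B = W ∧ A ⊓ B = ⊥ := by
  have hW0 : W ≠ ⊥ := fun hW0 => hWk 0 (Nat.zero_le n) (hW0 ▸ bot_le)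
  obtain ⟨v, hvW, hv0⟩ := Submodule.exists_mem_ne_zero_of_ne_bot hW0
  obtain ⟨S, hS⟩ := Finsupp.support_nonempty_iff.mpr hv0
  have hsplit := hW.inf_supported_sup_inf_supported (· = #S)
  refine ⟨W ⊓ Finsupp.supported F F {T | #T = #S}, W ⊓ Finsupp.supported F F {T | #T ≠ #S},
    hW.inf (isBnSub_supported_card (· = #S)), hW.inf (isBnSub_supported_card (· ≠ #S)),
    fun hA => ?_, fun hB => ?_, hsplit, ?_⟩
  · rw [hA, bot_sup_eq] at hsplit
    rw [← hsplit] at hvW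
    exact (Finsupp.mem_supported F v).mp hvW.2 hS rfl
  · rw [hB, sup_bot_eq] at hsplit
    refine hWk #S (card_le_univ S |>.trans_eq (Fintype.card_fin n)) ?_
    rw [VK_eq_supported, ← hsplit]
    exact inf_le_right
  · refine eq_bot_iff.mpr ((inf_le_inf inf_le_right inf_le_right).trans ?_)
    exact (Finsupp.disjoint_supported_supported disjoint_compl_right).le_bot

lemma card_filter_lt_le (S : Finset (Fin n)) (a : Fin n) : #(S.filter (· < a)) ≤ a :=
  (card_le_card fun _ hb => mem_Iio.mpr (mem_filter.mp hb).2).trans (Fin.card_Iio a).le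

def rankMap (S : Finset (Fin n)) : Fin n → Option (Fin n) :=
  fun a => if a ∈ S then some ⟨#(S.filter (· < a)), (card_filter_lt_le S a).trans_lt a.isLt⟩
    else none

lemma card_filter_lt_lt {α : Type*} [LinearOrder α] {S : Finset α} {a b : α} (ha : a ∈ S) (hab : a < b) :
    #(S.filter (· < a)) < #(S.filter (· < b)) := by
  refine card_lt_card (ssubset_iff_of_subset ?_ |>.mpr ⟨a, ?_, ?_⟩)
  · exact fun c hc => mem_filter.mpr ⟨(mem_filter.mp hc).1, (mem_filter.mp hc).2.trans hab⟩
  · exact mem_filter.mpr ⟨ha, hab⟩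
  · simp

lemma rankMap_eq_some {S : Finset (Fin n)} {a x : Fin n} :
    rankMap S a = some x ↔ a ∈ S ∧ (x : ℕ) = #(S.filter (· < a)) := by
  unfold rankMap
  split_ifs with ha
  · simp [ha, Fin.ext_iff, eq_comm]
  · simp [ha]

lemma rankMap_mem (S : Finset (Fin n)) : rankMap S ∈ Bn n := by
  have hpres : IsOrderPres (rankMap S) := by
    intro a b x y hab hax hby
    rw [rankMap_eq_some] at hax hby
    rw [Fin.lt_def, hax.2, hby.2]
    exact card_filter_lt_lt hax.1 hab
  refine ⟨fun a b x hax hbx => ?_, hpres, fun a x hax => ?_⟩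
  · rcases lt_trichotomy a b with hab | rfl | hba
    · exact absurd (hpres a b x x hab hax hbx) (lt_irrefl x)
    · rfl
    · exact absurd (hpres b a x x hba hbx hax) (lt_irrefl x)
  · rw [Fin.le_def, (rankMap_eq_some.mp hax).2]
    exact card_filter_lt_le S a

lemma domf_rankMap (S : Finset (Fin n)) : domf (rankMap S) = S := by
  ext a
  by_cases h : a ∈ S <;> simp [mem_domf, rankMap, h]

lemma fimg_rankMap (S : Finset (Fin n)) : fimg (rankMap S) S = boldK n #S := by
  refine eq_of_subset_of_card_le (fun x hx => ?_) ?_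
  · obtain ⟨a, ha, hax⟩ := mem_biUnion.mp hx
    rw [Option.mem_toFinset, Option.mem_def, rankMap_eq_some] at hax
    rw [boldK, mem_filter, hax.2]
    exact ⟨mem_univ x, card_lt_card (filter_ssubset.mpr ⟨a, ha, lt_irrefl a⟩)⟩
  · rw [card_fimg (rankMap_mem S).1 (domf_rankMap S).ge, boldK, Fin.card_filter_val_lt]
    exact min_le_right n #S

lemma actMap_rankMap {S : Finset (Fin n)} {v : Finset (Fin n) →₀ F}
    (hv : ∀ T ∈ v.support, #T = #S) :
    actMap F (rankMap S) v = Finsupp.single (boldK n #S) (v S) := by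
  rw [actMap_apply, Finsupp.sum, sum_eq_single S, if_pos (domf_rankMap S).ge, fimg_rankMap]
  · intro T hT hTS
    rw [domf_rankMap, if_neg fun hTS' => hTS (eq_of_subset_of_card_le hTS' (hv T hT).ge)]
  · intro hS
    simp [Finsupp.notMem_support_iff.mp hS]

lemma single_boldK_mem {A : Submodule F (Finset (Fin n) →₀ F)} (hA : IsBnSub A) {k : ℕ}
    (hAk : A ≤ VK F n k) (hA0 : A ≠ ⊥) : Finsupp.single (boldK n k) 1 ∈ A := by
  obtain ⟨a, haA, ha0⟩ := Submodule.exists_mem_ne_zero_of_ne_bot hA0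
  obtain ⟨S, hS⟩ := Finsupp.support_nonempty_iff.mpr ha0
  have hak : ∀ T ∈ a.support, #T = k := by
    have := hAk haA
    rw [VK_eq_supported, Finsupp.mem_supported] at this
    exact fun T hT => this hT
  have hact := A.smul_mem (a S)⁻¹ (hA _ (rankMap_mem S) a haA)
  rwa [actMap_rankMap fun T hT => (hak T hT).trans (hak S hS).symm, hak S hS,
    Finsupp.smul_single', inv_mul_cancel₀ (Finsupp.mem_support_iff.mp hS)] at hact

lemma not_exists_isBnSub_decomposition {W : Submodule F (Finset (Fin n) →₀ F)} {k : ℕ}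
    (hWk : W ≤ VK F n k) :
    ¬ ∃ A B : Submodule F (Finset (Fin n) →₀ F),
      IsBnSub A ∧ IsBnSub B ∧ A ≠ ⊥ ∧ B ≠ ⊥ ∧ A ⊔ B = W ∧ A ⊓ B = ⊥ := by
  rintro ⟨A, B, hA, hB, hA0, hB0, hAB, hAB0⟩
  have hAk : A ≤ VK F n k := hAB ▸ le_sup_left |>.trans hWk
  have hBk : B ≤ VK F n k := hAB ▸ le_sup_right |>.trans hWk
  have hmem : Finsupp.single (boldK n k) (1 : F) ∈ A ⊓ B :=
    ⟨single_boldK_mem hA hAk hA0, single_boldK_mem hB hBk hB0⟩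
  rw [hAB0, Submodule.mem_bot, Finsupp.single_eq_zero] at hmem
  exact one_ne_zero hmem

end

theorem indecomposable_iff_general (n : ℕ) (F : Type*) [Field F] [CharZero F]
    (W : Submodule F (Finset (Fin n) →₀ F)) (hW : IsBnSub W) :
    (¬ ∃ A B : Submodule F (Finset (Fin n) →₀ F),
        IsBnSub A ∧ IsBnSub B ∧ A ≠ ⊥ ∧ B ≠ ⊥ ∧ A ⊔ B = W ∧ A ⊓ B = ⊥) ↔
      ∃ k ≤ n, W ≤ VK F n k := by
  refine ⟨fun hW' => ?_, fun ⟨k, _, hWk⟩ => not_exists_isBnSub_decomposition hWk⟩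
  by_contra! hWk
  exact hW' (exists_isBnSub_decomposition hW hWk)

/-- a nonzero `B_n`-submodule `W` of `V` is indecomposable iff `W ≤ V_k` for some `k ≤ n`. -/
theorem indecomposable_iff (n : ℕ) (F : Type*) [Field F] [CharZero F]
    (W : Submodule F (Finset (Fin n) →₀ F)) (hW : IsBnSub W) (hW0 : W ≠ ⊥) :
    (¬ ∃ A B : Submodule F (Finset (Fin n) →₀ F),
        IsBnSub A ∧ IsBnSub B ∧ A ≠ ⊥ ∧ B ≠ ⊥ ∧ A ⊔ B = W ∧ A ⊓ B = ⊥) ↔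
      ∃ k ≤ n, W ≤ VK F n k :=
  indecomposable_iff_general n F W hW
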